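/- Let π : X × Y → X be the projection of a product graph to its first factor, let Γ' be a finite subgraph of X × Y, let # be the counting measure on VΓ', and let π_*# be the push-forward measure on the projected subgraph π(Γ') ⊂ X. Then for all p ≥ 1 and 0 < α < 1/4, C^{p,α}(Γ', #) ≤ C^{p,α}(π(Γ'), π_*#). -/

import Mathlib

/-! Pull an admissible `h` on `π(Γ')` back to `f = h ∘ π` on `Γ'`. Since `π_*#` counts fibres,
`f` is admissible for the counting measure, whose total mass equals that of `π_*#`. Every edge of
`X × Y` is either mapped by `π` to an edge of `X` or collapsed to a vertex, so
`|∇f| ≤ |∇h| ∘ π`, and summing `|∇h|^p ∘ π` over `Γ'` gives exactly `‖∇h‖_{π_*#,p}^p`. -/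

/-- The max-gradient of `f` at `x`: `sup` of `|f x - f y|` over neighbours `y`. -/
noncomputable def grad {V : Type*} (Adj : V → V → Prop) (f : V → ℝ) (x : V) : ℝ :=
  ⨆ y, ⨆ (_ : Adj x y), |f x - f y|

/-- The weighted `Lᵖ` norm `‖g‖_{μ,p} = (∑ |g x|^p μ x)^{1/p}`. -/
noncomputable def wnorm {V : Type*} [Fintype V] (μ : V → ℝ) (p : ℝ) (g : V → ℝ) : ℝ :=
  (∑ x, |g x| ^ p * μ x) ^ (1 / p)

/-- The `(p,α)`-capacity of a finite weighted graph: infimum of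
`μ(Γ)^{-1/p} ‖∇f‖_{μ,p}` over `f` with `μ{f ≤ 0} ≥ α μ(Γ)` and `μ{f ≥ 1} ≥ α μ(Γ)`. -/
noncomputable def capConst {V : Type*} [Fintype V] (p α : ℝ) (Adj : V → V → Prop)
    (μ : V → ℝ) : ℝ :=
  sInf { r | ∃ f : V → ℝ,
    (α * (∑ x, μ x) ≤ ∑ x, (if f x ≤ 0 then μ x else 0)) ∧
    (α * (∑ x, μ x) ≤ ∑ x, (if 1 ≤ f x then μ x else 0)) ∧
    r = (∑ x, μ x) ^ (-(1 / p)) * wnorm μ p (grad Adj f) }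

/-- The push-forward of the counting measure on `S ⊆ VX × VY` under the first
projection: `(π_*#)(v) = |π⁻¹(v) ∩ S|`. -/
noncomputable def pushMeasure {VX VY : Type*} [DecidableEq VX] (S : Finset (VX × VY))
    (v : ↥(S.image Prod.fst)) : ℝ :=
  ((S.filter fun z => z.1 = (v : VX)).card : ℝ)

open Finset

section Gradient

variable {V : Type*} (Adj : V → V → Prop)

lemma grad_nonneg (f : V → ℝ) (x : V) : 0 ≤ grad Adj f x :=
  Real.iSup_nonneg fun _ => Real.iSup_nonneg fun _ => abs_nonneg _

lemma abs_sub_le_grad [Finite V] (f : V → ℝ) {x y : V} (hxy : Adj x y) :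
    |f x - f y| ≤ grad Adj f x := by
  rw [grad, ← ciSup_pos (f := fun _ : Adj x y => |f x - f y|) hxy]
  exact le_ciSup (Set.finite_range fun y => ⨆ _ : Adj x y, |f x - f y|).bddAbove y

lemma grad_comp_le {W : Type*} [Finite W] (AdjW : W → W → Prop) (π : V → W)
    (hπ : ∀ a b, Adj a b → AdjW (π a) (π b) ∨ π a = π b) (h : W → ℝ) (z : V) :
    grad Adj (h ∘ π) z ≤ grad AdjW h (π z) := by
  refine Real.iSup_le (fun w => Real.iSup_le (fun hzw => ?_) (grad_nonneg _ _ _))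
    (grad_nonneg _ _ _)
  rcases hπ z w hzw with hadj | heq
  · exact abs_sub_le_grad AdjW h hadj
  · simpa [heq] using grad_nonneg AdjW h (π w)

end Gradient

lemma wnorm_nonneg {V : Type*} [Fintype V] {μ : V → ℝ} (hμ : 0 ≤ μ) (p : ℝ) (g : V → ℝ) :
    0 ≤ wnorm μ p g :=
  Real.rpow_nonneg (sum_nonneg fun x _ => mul_nonneg (by positivity) (hμ x)) _

lemma capConst_le {V : Type*} [Fintype V] {p α : ℝ} {Adj : V → V → Prop} {μ : V → ℝ}
    (hμ : 0 ≤ μ) (f : V → ℝ)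
    (hle : α * (∑ x, μ x) ≤ ∑ x, (if f x ≤ 0 then μ x else 0))
    (hge : α * (∑ x, μ x) ≤ ∑ x, (if 1 ≤ f x then μ x else 0)) :
    capConst p α Adj μ ≤ (∑ x, μ x) ^ (-(1 / p)) * wnorm μ p (grad Adj f) := by
  refine csInf_le ⟨0, ?_⟩ ⟨f, hle, hge, rfl⟩
  rintro r ⟨g, -, -, rfl⟩
  exact mul_nonneg (Real.rpow_nonneg (sum_nonneg fun x _ => hμ x) _) (wnorm_nonneg hμ p _)

section Projection

variable {VX VY : Type*} [DecidableEq VX] (S : Finset (VX × VY))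

def projFst (z : ↥S) : ↥(S.image Prod.fst) :=
  ⟨z.1.1, mem_image_of_mem Prod.fst z.2⟩

lemma card_filter_projFst_eq (v : ↥(S.image Prod.fst)) :
    #{z | projFst S z = v} = #(S.filter fun z => z.1 = (v : VX)) := by
  rw [← card_map (Function.Embedding.subtype _)]
  congr 1
  ext z
  simpa [projFst, Subtype.ext_iff] using and_comm

lemma sum_comp_projFst (F : ↥(S.image Prod.fst) → ℝ) :
    ∑ z, F (projFst S z) = ∑ v, F v * pushMeasure S v := by
  rw [← sum_fiberwise univ (projFst S)]
  refine sum_congr rfl fun v _ => ?_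
  rw [sum_congr rfl fun z hz => congrArg F (mem_filter.1 hz).2, sum_const,
    card_filter_projFst_eq, nsmul_eq_mul, mul_comm, pushMeasure]

lemma sum_ite_comp_projFst (P : ↥(S.image Prod.fst) → Prop) [DecidablePred P] :
    ∑ z, (if P (projFst S z) then (1 : ℝ) else 0) = ∑ v, if P v then pushMeasure S v else 0 := by
  rw [sum_comp_projFst S fun v => if P v then 1 else 0]
  exact sum_congr rfl fun v _ => by split_ifs <;> simp

lemma boxProd_adj_projFst (X : SimpleGraph VX) (Y : SimpleGraph VY) (a b : ↥S)
    (hab : (X.boxProd Y).Adj a.1 b.1) :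
    X.Adj (projFst S a : VX) (projFst S b) ∨ projFst S a = projFst S b := by
  rcases SimpleGraph.boxProd_adj.1 hab with ⟨hX, -⟩ | ⟨-, hfst⟩
  · exact Or.inl hX
  · exact Or.inr (Subtype.ext hfst)

lemma wnorm_grad_comp_projFst_le (X : SimpleGraph VX) (Y : SimpleGraph VY) {p : ℝ} (hp : 0 ≤ p)
    (h : ↥(S.image Prod.fst) → ℝ) :
    wnorm (fun _ => (1 : ℝ)) p (grad (fun a b : ↥S => (X.boxProd Y).Adj a.1 b.1) (h ∘ projFst S))
      ≤ wnorm (pushMeasure S) p (grad (fun a b : ↥(S.image Prod.fst) => X.Adj a b) h) := by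
  set AdjX := fun a b : ↥(S.image Prod.fst) => X.Adj a b
  have hgrad := grad_comp_le _ AdjX (projFst S) (boxProd_adj_projFst S X Y) h
  refine Real.rpow_le_rpow (sum_nonneg fun z _ => by positivity) ?_ (by positivity)
  calc ∑ z, |grad _ (h ∘ projFst S) z| ^ p * 1
      ≤ ∑ z, |grad AdjX h (projFst S z)| ^ p := by
        refine sum_le_sum fun z _ => ?_
        rw [mul_one, abs_of_nonneg (grad_nonneg _ _ _), abs_of_nonneg (grad_nonneg _ _ _)]
        exact Real.rpow_le_rpow (grad_nonneg _ _ _) (hgrad z) hp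
    _ = ∑ v, |grad AdjX h v| ^ p * pushMeasure S v :=
        sum_comp_projFst S fun v => |grad AdjX h v| ^ p

end Projection

theorem stmt7_general {VX VY : Type*} [DecidableEq VX]
    (X : SimpleGraph VX) (Y : SimpleGraph VY) (S : Finset (VX × VY))
    (p α : ℝ) (hp : 1 ≤ p)
    (h : ↥(S.image Prod.fst) → ℝ)
    (hle : α * (∑ v, pushMeasure S v) ≤ ∑ v, (if h v ≤ 0 then pushMeasure S v else 0))
    (hge : α * (∑ v, pushMeasure S v) ≤ ∑ v, (if 1 ≤ h v then pushMeasure S v else 0)) :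
    capConst p α (fun a b : ↥S => (X.boxProd Y).Adj a.1 b.1) (fun _ => (1 : ℝ))
      ≤ (∑ v, pushMeasure S v) ^ (-(1 / p)) *
        wnorm (pushMeasure S) p
          (grad (fun a b : ↥(S.image Prod.fst) => X.Adj (a : VX) (b : VX)) h) := by
  have hcard : ∑ _z : ↥S, (1 : ℝ) = ∑ v, pushMeasure S v := by
    simpa using sum_ite_comp_projFst S fun _ => True
  have hle' := sum_ite_comp_projFst S fun v => h v ≤ 0
  have hge' := sum_ite_comp_projFst S fun v => 1 ≤ h v
  calc capConst p α _ (fun _ => (1 : ℝ))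
      ≤ (∑ _z : ↥S, (1 : ℝ)) ^ (-(1 / p)) * wnorm (fun _ => 1) p (grad _ (h ∘ projFst S)) :=
        capConst_le (fun _ => zero_le_one) _ (by rwa [hcard, Function.comp_def, hle'])
          (by rwa [hcard, Function.comp_def, hge'])
    _ ≤ _ := by
        rw [hcard]
        exact mul_le_mul_of_nonneg_left (wnorm_grad_comp_projFst_le S X Y (by linarith) h)
          (Real.rpow_nonneg (sum_nonneg fun v _ => Nat.cast_nonneg _) _)

/-- Projection is monotone for capacities: for any finite subgraph `Γ'` of the product
graph `X × Y` (induced on a vertex set `S`), and any `h` admissible for the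
`(p,α)`-capacity of the projected weighted subgraph `(π(Γ'), π_*#)` of `X`,
`C^{p,α}(Γ', #) ≤ (π_*#)(π Γ')^{-1/p} ‖∇h‖_{π_*#,p}`;
that is, `C^{p,α}(Γ', #) ≤ C^{p,α}(π(Γ'), π_*#)`. -/
theorem stmt7 {VX VY : Type*} [DecidableEq VX]
    (X : SimpleGraph VX) (Y : SimpleGraph VY) (S : Finset (VX × VY))
    (p α : ℝ) (hp : 1 ≤ p) (hα0 : 0 < α) (hα : α < 1 / 4)
    (h : ↥(S.image Prod.fst) → ℝ)
    (hle : α * (∑ v, pushMeasure S v) ≤ ∑ v, (if h v ≤ 0 then pushMeasure S v else 0))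
    (hge : α * (∑ v, pushMeasure S v) ≤ ∑ v, (if 1 ≤ h v then pushMeasure S v else 0)) :
    capConst p α (fun a b : ↥S => (X.boxProd Y).Adj a.1 b.1) (fun _ => (1 : ℝ))
      ≤ (∑ v, pushMeasure S v) ^ (-(1 / p)) *
        wnorm (pushMeasure S) p
          (grad (fun a b : ↥(S.image Prod.fst) => X.Adj (a : VX) (b : VX)) h) :=
  stmt7_general X Y S p α hp h hle hge
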